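/- Let 𝒢=(V,E) be a temporal graph whose underlying graph is acyclic (a forest), let s,z∈V with s≠z, and let x,δ∈ℕ. Then (i) any two temporal paths from s to z in 𝒢 visit the same sequence of vertices, namely the unique s–z path in the underlying forest; and (ii) there exists an x-traversal-delay-robust (s,z)-route in 𝒢 if and only if s and z are connected in the underlying forest and the vertex sequence of the unique s–z path in the underlying forest is an x-traversal-delay-robust route. -/

import Mathlib

/-- A time arc of a temporal graph: start vertex, end vertex, time label, traversal time. -/
structure TimeArc (V : Type) where
  src : V
  dst : V
  time : ℕ
  trav : ℕ
deriving DecidableEq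

variable {V : Type}

/-- `P` is a `D`-traversal-delayed temporal walk in the temporal graph with time-arc set `E`
(with delay time `δ`). -/
def IsTDWalk [DecidableEq V] (E D : Finset (TimeArc V)) (δ : ℕ)
    (P : List (TimeArc V)) : Prop :=
  (∀ e ∈ P, e ∈ E) ∧
  P.Chain' (fun e f => f.src = e.dst ∧
    e.time + e.trav + (if e ∈ D then δ else 0) ≤ f.time)

/-- `P` is a `D`-starting-delayed temporal walk in the temporal graph with time-arc set `E`
(with delay time `δ`). -/
def IsSDWalk [DecidableEq V] (E D : Finset (TimeArc V)) (δ : ℕ)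
    (P : List (TimeArc V)) : Prop :=
  (∀ e ∈ P, e ∈ E) ∧
  P.Chain' (fun e f => f.src = e.dst ∧
    e.time + e.trav + (if e ∈ D then δ else 0) ≤ f.time + (if f ∈ D then δ else 0))

/-- The sequence of vertices visited by a walk: the start vertex of its first arc followed by
the end vertices of all its arcs. -/
def visits : List (TimeArc V) → List V
  | [] => []
  | e :: es => e.src :: (e :: es).map TimeArc.dst

/-- The walk `P` follows the route `R`: the visited vertex sequence of `P` equals `R`
(the empty walk follows every single-vertex route). -/
def Follows (P : List (TimeArc V)) (R : List V) : Prop :=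
  match P with
  | [] => ∃ v, R = [v]
  | e :: es => visits (e :: es) = R

/-- `R` is a `D`-traversal-delayed route: some `D`-traversal-delayed temporal walk follows `R`. -/
def IsTDRoute [DecidableEq V] (E D : Finset (TimeArc V)) (δ : ℕ) (R : List V) : Prop :=
  ∃ P : List (TimeArc V), IsTDWalk E D δ P ∧ Follows P R

/-- `R` is a `D`-starting-delayed route: some `D`-starting-delayed temporal walk follows `R`. -/
def IsSDRoute [DecidableEq V] (E D : Finset (TimeArc V)) (δ : ℕ) (R : List V) : Prop :=
  ∃ P : List (TimeArc V), IsSDWalk E D δ P ∧ Follows P R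

/-- `R` is `x`-traversal-delay-robust: it is a `D`-traversal-delayed route for every
`D ⊆ E` with `|D| ≤ x`. -/
def TDRobust [DecidableEq V] (E : Finset (TimeArc V)) (δ x : ℕ) (R : List V) : Prop :=
  ∀ D : Finset (TimeArc V), D ⊆ E → D.card ≤ x → IsTDRoute E D δ R

/-- `R` is `x`-starting-delay-robust: it is a `D`-starting-delayed route for every
`D ⊆ E` with `|D| ≤ x`. -/
def SDRobust [DecidableEq V] (E : Finset (TimeArc V)) (δ x : ℕ) (R : List V) : Prop :=
  ∀ D : Finset (TimeArc V), D ⊆ E → D.card ≤ x → IsSDRoute E D δ R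

/-- `P` is a temporal walk (no delays applied) in the temporal graph with time-arc set `E`. -/
def IsTemporalWalk (E : Finset (TimeArc V)) (P : List (TimeArc V)) : Prop :=
  (∀ e ∈ P, e ∈ E) ∧
  P.Chain' (fun e f => f.src = e.dst ∧ e.time + e.trav ≤ f.time)

/-- A temporal path: a temporal walk that visits no vertex twice. -/
def IsTemporalPath (E : Finset (TimeArc V)) (P : List (TimeArc V)) : Prop :=
  IsTemporalWalk E P ∧ (visits P).Nodup

/-- The underlying (static, undirected, simple) graph of a temporal graph: `v` and `w`
are adjacent whenever some time arc connects them (in either direction). -/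
def underlying (E : Finset (TimeArc V)) : SimpleGraph V :=
  SimpleGraph.fromRel (fun a b => ∃ e ∈ E, e.src = a ∧ e.dst = b)

lemma getLast?_cons_ne {α : Type} {a : α} {l : List α} (h : l ≠ []) :
    (a :: l).getLast? = l.getLast? := by
  rw [← List.singleton_append, List.getLast?_append_of_ne_nil _ h]

lemma visits_head? {P : List (TimeArc V)} {a : TimeArc V} (h : P.head? = some a) :
    (visits P).head? = some a.src := by
  cases P with
  | nil => simp at h
  | cons e l => simp_all [visits]

lemma visits_getLast? {P : List (TimeArc V)} (h : P ≠ []) :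
    (visits P).getLast? = (P.map TimeArc.dst).getLast? := by
  cases P with
  | nil => simp at h
  | cons e l => simp [visits, getLast?_cons_ne]

lemma map_not_nodup {α β : Type} (g : α → β) :
    ∀ (l : List α), ¬ (l.map g).Nodup →
    ∃ l₁ e l₂ f l₃, l = l₁ ++ e :: l₂ ++ f :: l₃ ∧ g e = g f := by
  intro l
  induction l with
  | nil => simp
  | cons a l ih =>
    intro h
    rw [List.map_cons, List.nodup_cons] at h
    by_cases hmem : g a ∈ l.map g
    · obtain ⟨b, hb, hgb⟩ := List.mem_map.mp hmem
      obtain ⟨l₂, l₃, rfl⟩ := List.append_of_mem hb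
      exact ⟨[], a, l₂, b, l₃, by simp, hgb.symm⟩
    · have h' : ¬ (l.map g).Nodup := fun hn => h ⟨hmem, hn⟩
      obtain ⟨l₁, e, l₂, f, l₃, heq, hef⟩ := ih h'
      exact ⟨a :: l₁, e, l₂, f, l₃, by simp [heq], hef⟩

lemma walk_support_getLast? {G : SimpleGraph V} : ∀ {u v : V} (p : G.Walk u v),
    p.support.getLast? = some v := by
  intro u v p
  induction p with
  | nil => simp
  | cons h q ihq =>
    rw [SimpleGraph.Walk.support_cons, getLast?_cons_ne (by simp), ihq]

variable {V : Type}

lemma toGraphWalk (E : Finset (TimeArc V)) :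
    ∀ (P : List (TimeArc V)) (s z : V), (∀ e ∈ P, e ∈ E) →
    P.Chain' (fun e f => f.src = e.dst) → (visits P).Nodup →
    (visits P).head? = some s → (visits P).getLast? = some z →
    ∃ p : (underlying E).Walk s z, p.IsPath ∧ visits P = p.support := by
  intro P
  induction P with
  | nil => intro s z _ _ _ hh _; simp [visits] at hh
  | cons e tail ih =>
    intro s z hmem hch hnd hh hl
    have hs : s = e.src := by simpa [visits] using hh.symm
    subst hs
    cases tail with
    | nil =>
      have hz : z = e.dst := by simpa [visits] using hl.symm
      subst hz
      have hne : e.src ≠ e.dst := by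
        simp [visits] at hnd; exact hnd
      have hadj : (underlying E).Adj e.src e.dst := by
        rw [underlying, SimpleGraph.fromRel_adj]
        exact ⟨hne, Or.inl ⟨e, hmem e (by simp), rfl, rfl⟩⟩
      refine ⟨SimpleGraph.Walk.cons hadj SimpleGraph.Walk.nil, ?_, ?_⟩
      · simp [SimpleGraph.Walk.isPath_def, hne]
      · simp [visits]
    | cons f es =>
      have hsrc : f.src = e.dst := (List.isChain_cons_cons.mp hch).1
      have hvis : visits (e :: f :: es) = e.src :: visits (f :: es) := by
        simp [visits, hsrc]
      rw [hvis] at hnd hl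
      have hnd' := (List.nodup_cons.mp hnd).2
      have hmm : e.src ∉ visits (f :: es) := (List.nodup_cons.mp hnd).1
      have hl' : (visits (f :: es)).getLast? = some z := by
        rwa [getLast?_cons_ne (by simp [visits])] at hl
      have hh' : (visits (f :: es)).head? = some e.dst := by simp [visits, hsrc]
      obtain ⟨p, hp, hpe⟩ := ih e.dst z (fun x hx => hmem x (by simp [hx]))
        (List.isChain_cons_cons.mp hch).2 hnd' hh' hl'
      have hne : e.src ≠ e.dst := by
        intro h; apply hmm; rw [h]; simp [visits]; exact Or.inl hsrc.symm
      have hadj : (underlying E).Adj e.src e.dst := by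
        rw [underlying, SimpleGraph.fromRel_adj]
        exact ⟨hne, Or.inl ⟨e, hmem e (by simp), rfl, rfl⟩⟩
      refine ⟨SimpleGraph.Walk.cons hadj p, ?_, ?_⟩
      · exact hp.cons (by rw [← hpe]; exact hmm)
      · rw [SimpleGraph.Walk.support_cons, hvis, hpe]

lemma getLast?_mid {α : Type} (l₁ l₂ l₃ : List α) (a b : α) (hab : a = b) :
    (l₁ ++ a :: l₃).getLast? = (l₁ ++ a :: l₂ ++ b :: l₃).getLast? := by
  have h1 : (l₁ ++ a :: l₃).getLast? = (a :: l₃).getLast? :=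
    List.getLast?_append_of_ne_nil _ (by simp)
  have h2 : (l₁ ++ a :: l₂ ++ b :: l₃).getLast? = (b :: l₃).getLast? :=
    List.getLast?_append_of_ne_nil _ (by simp)
  rw [h1, h2]
  cases l₃ with
  | nil => simp [hab]
  | cons c l₃ =>
    rw [getLast?_cons_ne (List.cons_ne_nil _ _), getLast?_cons_ne (List.cons_ne_nil _ _)]

lemma extract [DecidableEq V] (E D : Finset (TimeArc V)) (δ : ℕ) :
    ∀ (n : ℕ) (P : List (TimeArc V)) (s z : V), P.length ≤ n →
      IsTDWalk E D δ P → s ≠ z →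
      (visits P).head? = some s → (visits P).getLast? = some z →
      ∃ P', IsTDWalk E D δ P' ∧ (visits P').Nodup ∧
        (visits P').head? = some s ∧ (visits P').getLast? = some z := by
  intro n
  induction n with
  | zero =>
    intro P s z hlen _ _ hh _
    have hP : P = [] := by cases P <;> simp_all
    subst hP; simp [visits] at hh
  | succ n ih =>
    intro P s z hlen hw hsz hh hl
    by_cases hnd : (visits P).Nodup
    · exact ⟨P, hw, hnd, hh, hl⟩
    cases P with
    | nil => simp [visits] at hh
    | cons e₀ rest =>
    have hs : s = e₀.src := by simpa [visits] using hh.symm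
    by_cases hmemdup : s ∈ (e₀ :: rest).map TimeArc.dst
    · -- case (a): drop a prefix
      obtain ⟨b, hb, hbdst⟩ := List.mem_map.mp hmemdup
      obtain ⟨A, B, hP⟩ := List.append_of_mem hb
      cases B with
      | nil =>
        exfalso
        have h1 : (visits (e₀ :: rest)).getLast? = some b.dst := by
          rw [visits_getLast? (by simp), hP]
          simp
        rw [hl] at h1
        exact hsz ((Option.some.inj h1).trans hbdst).symm
      | cons g B' =>
        have hch := hw.2
        rw [hP, List.append_cons] at hch; unfold List.Chain' at hch; rw [List.isChain_append] at hch
        obtain ⟨h1, h2, h3⟩ := hch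
        have hR := h3 b (by simp) g rfl
        have hwB : IsTDWalk E D δ (g :: B') := by
          refine ⟨fun x hx => hw.1 x ?_, h2⟩
          rw [hP]; simp at hx ⊢; tauto
        have hhB : (visits (g :: B')).head? = some s := by
          rw [visits_head? (show (g :: B').head? = some g from rfl), hR.1, hbdst]
        have hlB : (visits (g :: B')).getLast? = some z := by
          rw [visits_getLast? (by simp)]
          have h4 : (visits (e₀ :: rest)).getLast? = ((g :: B').map TimeArc.dst).getLast? := by
            rw [visits_getLast? (by simp), hP, List.append_cons, List.map_append,
              List.getLast?_append_of_ne_nil _ (by simp)]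
          rw [← h4, hl]
        have hlen' : (g :: B').length ≤ n := by
          have h5 := congrArg List.length hP
          simp at h5 hlen ⊢; omega
        exact ih (g :: B') s z hlen' hwB hsz hhB hlB
    · -- case (b): cut out a cycle in the middle
      have hndM : ¬ ((e₀ :: rest).map TimeArc.dst).Nodup := by
        have hvv : (visits (e₀ :: rest)) = e₀.src :: (e₀ :: rest).map TimeArc.dst := rfl
        rw [hvv, List.nodup_cons, ← hs] at hnd
        tauto
      obtain ⟨P₁, e, P₂, f, P₃, hP, hef⟩ := map_not_nodup TimeArc.dst _ hndM
      have hmono : List.Pairwise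
          (fun a b : TimeArc V => a.time + a.trav + (if a ∈ D then δ else 0) ≤ b.time)
          (e₀ :: rest) := by
        letI : IsTrans (TimeArc V)
            (fun a b : TimeArc V => a.time + a.trav + (if a ∈ D then δ else 0) ≤ b.time) :=
          ⟨fun a b c h1 h2 =>
            h1.trans (((Nat.le_add_right _ _).trans (Nat.le_add_right _ _)).trans h2)⟩
        exact List.isChain_iff_pairwise.mp (hw.2.imp fun a b h => h.2)
      have hch := hw.2
      rw [hP] at hch hmono
      unfold List.Chain' at hch; rw [List.isChain_append] at hch
      obtain ⟨h1, h2, hj⟩ := hch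
      -- h1 : Chain' (P₁ ++ e :: P₂), h2 : Chain' (f :: P₃)
      rw [List.append_cons P₁, List.isChain_append] at h1
      obtain ⟨h1a, h1b, hj1⟩ := h1
      have hw' : IsTDWalk E D δ (P₁ ++ e :: P₃) := by
        constructor
        · intro x hx
          apply hw.1 x
          rw [hP]; simp at hx ⊢; tauto
        · unfold List.Chain'; rw [List.append_cons P₁, List.isChain_append]
          refine ⟨h1a, h2.tail, ?_⟩
          intro x hx y hy
          rw [List.getLast?_concat, Option.mem_def, Option.some.injEq] at hx
          subst hx
          cases P₃ with
          | nil => simp at hy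
          | cons g B' =>
            rw [show (g :: B').head? = some g from rfl, Option.mem_def, Option.some.injEq] at hy
            subst hy
            constructor
            · rw [(List.isChain_cons_cons.mp h2).1.1, ← hef]
            · obtain ⟨-, -, hAB⟩ := List.pairwise_append.mp hmono
              exact hAB e (by simp) g (by simp)
      have hh' : ∃ a, (P₁ ++ e :: P₃).head? = some a ∧
          ((P₁ ++ e :: P₂) ++ f :: P₃).head? = some a := by
        cases P₁ with
        | nil => exact ⟨e, by simp, by simp⟩
        | cons a A => exact ⟨a, by simp, by simp⟩
      obtain ⟨a, ha1, ha2⟩ := hh'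
      have hhead : (visits (P₁ ++ e :: P₃)).head? = some s := by
        rw [hP, visits_head? ha2] at hh
        rw [visits_head? ha1]
        exact hh
      have hlast : (visits (P₁ ++ e :: P₃)).getLast? = some z := by
        rw [hP, visits_getLast? (by simp)] at hl
        rw [visits_getLast? (by simp), List.map_append, List.map_cons]
        rw [getLast?_mid (P₁.map TimeArc.dst) (P₂.map TimeArc.dst) (P₃.map TimeArc.dst)
          e.dst f.dst hef]
        simpa using hl
      have hlen' : (P₁ ++ e :: P₃).length ≤ n := by
        have h5 := congrArg List.length hP
        simp at h5 hlen ⊢; omega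
      exact ih (P₁ ++ e :: P₃) s z hlen' hw' hsz hhead hlast
theorem statement10 {V : Type} [DecidableEq V] (E : Finset (TimeArc V))
    (hforest : (underlying E).IsAcyclic) (s z : V) (hsz : s ≠ z) (x δ : ℕ) :
    -- (i) any two temporal paths from `s` to `z` visit the same vertex sequence, namely the
    -- vertex sequence of the unique `s`-`z` path in the underlying forest
    ((∀ P Q : List (TimeArc V), IsTemporalPath E P → IsTemporalPath E Q →
        (visits P).head? = some s → (visits P).getLast? = some z →
        (visits Q).head? = some s → (visits Q).getLast? = some z →
        visits P = visits Q) ∧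
      (∀ P : List (TimeArc V), IsTemporalPath E P →
        (visits P).head? = some s → (visits P).getLast? = some z →
        ∃ p : (underlying E).Walk s z, p.IsPath ∧ visits P = p.support)) ∧
    -- (ii) an `x`-traversal-delay-robust `(s,z)`-route exists iff `s` and `z` are connected
    -- in the underlying forest and the vertex sequence of the unique `s`-`z` path is robust
    ((∃ R : List V, R.head? = some s ∧ R.getLast? = some z ∧ TDRobust E δ x R) ↔
      ((underlying E).Reachable s z ∧
        ∀ p : (underlying E).Walk s z, p.IsPath → TDRobust E δ x p.support)) := by
  -- a common helper: from a robust route, for each D, produce a graph path realized by a walk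
  have key : ∀ (R : List V), R.head? = some s → R.getLast? = some z →
      ∀ D : Finset (TimeArc V), IsTDRoute E D δ R →
      ∃ P₀ : List (TimeArc V), IsTDWalk E D δ P₀ ∧
        ∃ p₀ : (underlying E).Walk s z, p₀.IsPath ∧ visits P₀ = p₀.support := by
    intro R hRh hRl D hroute
    obtain ⟨P, hw, hf⟩ := hroute
    cases P with
    | nil =>
      obtain ⟨v, rfl⟩ := hf
      simp at hRh hRl
      exact absurd (hRh.symm.trans hRl) hsz
    | cons e es =>
      have hf' : visits (e :: es) = R := hf
      obtain ⟨P₀, hw₀, hnd₀, hh₀, hl₀⟩ := extract E D δ (e :: es).length (e :: es) s z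
        le_rfl hw hsz (by rw [hf']; exact hRh) (by rw [hf']; exact hRl)
      obtain ⟨p₀, hp₀, he₀⟩ := toGraphWalk E P₀ s z hw₀.1
        (hw₀.2.imp fun a b h => h.1) hnd₀ hh₀ hl₀
      exact ⟨P₀, hw₀, p₀, hp₀, he₀⟩
  refine ⟨⟨?_, ?_⟩, ?_, ?_⟩
  · intro P Q hP hQ hPh hPl hQh hQl
    obtain ⟨p, hp, hpe⟩ := toGraphWalk E P s z hP.1.1 (hP.1.2.imp fun a b h => h.1) hP.2 hPh hPl
    obtain ⟨q, hq, hqe⟩ := toGraphWalk E Q s z hQ.1.1 (hQ.1.2.imp fun a b h => h.1) hQ.2 hQh hQl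
    have hpq : (⟨p, hp⟩ : (underlying E).Path s z) = ⟨q, hq⟩ := hforest.path_unique _ _
    have hpq' : p = q := congrArg Subtype.val hpq
    rw [hpe, hqe, hpq']
  · intro P hP hPh hPl
    exact toGraphWalk E P s z hP.1.1 (hP.1.2.imp fun a b h => h.1) hP.2 hPh hPl
  · rintro ⟨R, hRh, hRl, hrob⟩
    have hpath0 := key R hRh hRl ∅ (hrob ∅ (Finset.empty_subset E) (by simp))
    obtain ⟨_, _, p₀, hp₀, -⟩ := hpath0
    refine ⟨⟨p₀⟩, ?_⟩
    intro p hp D hD hcard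
    obtain ⟨P₀, hw₀, q₀, hq₀, he₀⟩ := key R hRh hRl D (hrob D hD hcard)
    have hpq : p = q₀ := by
      have := hforest.path_unique (⟨p, hp⟩ : (underlying E).Path s z) ⟨q₀, hq₀⟩
      exact congrArg Subtype.val this
    refine ⟨P₀, hw₀, ?_⟩
    cases P₀ with
    | nil => rw [show visits ([] : List (TimeArc V)) = [] from rfl] at he₀
             exact absurd he₀.symm (SimpleGraph.Walk.support_ne_nil _)
    | cons e es =>
      show visits (e :: es) = p.support
      rw [he₀, hpq]
  · rintro ⟨hreach, hall⟩
    obtain ⟨w⟩ := hreach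
    refine ⟨w.toPath.1.support, ?_, ?_, hall w.toPath.1 w.toPath.2⟩
    · rw [SimpleGraph.Walk.support_eq_cons]; rfl
    · exact walk_support_getLast? _
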